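/- Given a finite multiplayer information structure and a probability distribution p ∈ Δ(Ω), exactly one of the following holds: (1) p is a common prior; (2) p is a multiplayer money pump, i.e., there exists a family (f_i)_{i∈N} such that at every state the event {ω' : ∫ f_i dt_i(ω') ≥ 0 for all i} is commonly certain, and ∫ Σ_i f_i dp < 0. -/

import Mathlib

open Finset

variable {Ω : Type*} [Fintype Ω]

open Classical in
/-- The mass that a (finitely additive) distribution `p` assigns to an event `E`. -/
noncomputable def mass (p : Ω → ℝ) (E : Set Ω) : ℝ :=
  ∑ ω, if ω ∈ E then p ω else 0

/-- Expectation of `f` with respect to the distribution `q`. -/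
def expect (q f : Ω → ℝ) : ℝ := ∑ ω, q ω * f ω

/-- `p` is a probability distribution on the finite state space `Ω`. -/
def IsProbDist (p : Ω → ℝ) : Prop := (∀ ω, 0 ≤ p ω) ∧ ∑ ω, p ω = 1

/-- `part` sends each state to its partition cell. -/
def IsPartitionMap (part : Ω → Set Ω) : Prop :=
  (∀ ω, ω ∈ part ω) ∧ ∀ ω ω', ω' ∈ part ω → part ω' = part ω

/-- A single player information structure `(Ω, Π, t)`: `Π` a partition of `Ω`,
`t : Ω → Δ(Ω)` with `t ω (π ω) = 1`, and `t` constant on partition cells. -/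
def InfoStructure1 (part : Ω → Set Ω) (t : Ω → Ω → ℝ) : Prop :=
  IsPartitionMap part ∧ (∀ ω, IsProbDist (t ω)) ∧ (∀ ω, mass (t ω) (part ω) = 1) ∧
    (∀ ω ω', ω' ∈ part ω → t ω' = t ω)

/-- `p` is `(Π,t)`-disintegrable: `p (E ∩ π) = t ω E * p π` for every event `E`,
every partition cell `π` and every `ω ∈ π`. -/
def Disintegrable (part : Ω → Set Ω) (t : Ω → Ω → ℝ) (p : Ω → ℝ) : Prop :=
  ∀ (E : Set Ω) (ω : Ω), mass p (E ∩ part ω) = mass (t ω) E * mass p (part ω)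

/-- `p` is `(Π,t)`-conglomerable: for every event `E`,
`min_ω t ω E ≤ p E ≤ max_ω t ω E`. -/
def Conglomerable [Nonempty Ω] (t : Ω → Ω → ℝ) (p : Ω → ℝ) : Prop :=
  ∀ E : Set Ω,
    univ.inf' univ_nonempty (fun ω => mass (t ω) E) ≤ mass p E ∧
      mass p E ≤ univ.sup' univ_nonempty (fun ω => mass (t ω) E)

/-- A semi-trade: the player expects a nonnegative gain at every state. -/
def SemiTrade1 (t : Ω → Ω → ℝ) (f : Ω → ℝ) : Prop := ∀ ω, 0 ≤ expect (t ω) f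

/-- `p` is a money pump: some semi-trade has negative expectation under `p`. -/
def MoneyPump1 (t : Ω → Ω → ℝ) (p : Ω → ℝ) : Prop :=
  ∃ f : Ω → ℝ, SemiTrade1 t f ∧ expect p f < 0

variable {N : Type*} [Fintype N]

/-- A multiplayer information structure: each player's partition and type
function form a single player information structure. -/
def InfoStructure (part : N → Ω → Set Ω) (t : N → Ω → Ω → ℝ) : Prop :=
  ∀ i, InfoStructure1 (part i) (t i)

/-- A common certainty component: a nonempty `S` such that at each `ω ∈ S`
every player assigns probability one to some event contained in `S`. -/
def CCC (t : N → Ω → Ω → ℝ) (S : Set Ω) : Prop :=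
  S.Nonempty ∧ ∀ ω ∈ S, ∀ i, ∃ E ⊆ S, mass (t i ω) E = 1

/-- The event `E` is commonly certain at state `ω`. -/
def CommonlyCertainAt (t : N → Ω → Ω → ℝ) (E : Set Ω) (ω : Ω) : Prop :=
  ∃ S : Set Ω, CCC t S ∧ ω ∈ S ∧ S ⊆ E

/-- A common prior: a probability distribution that is a prior (i.e.
disintegrable) for every player. -/
def CommonPrior (part : N → Ω → Set Ω) (t : N → Ω → Ω → ℝ) (p : Ω → ℝ) : Prop :=
  IsProbDist p ∧ ∀ i, Disintegrable (part i) (t i) p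

/-- A universal common prior: a common prior giving positive probability to
every common certainty component. -/
def UniversalCommonPrior (part : N → Ω → Set Ω) (t : N → Ω → Ω → ℝ) (p : Ω → ℝ) : Prop :=
  CommonPrior part t p ∧ ∀ S : Set Ω, CCC t S → 0 < mass p S

/-- A strong common prior: a common prior giving positive probability to every
partition cell of every player. -/
def StrongCommonPrior (part : N → Ω → Set Ω) (t : N → Ω → Ω → ℝ) (p : Ω → ℝ) : Prop :=
  CommonPrior part t p ∧ ∀ i ω, 0 < mass p (part i ω)

/-- A trade: the payoffs sum to at most zero at every state. -/
def Trade (f : N → Ω → ℝ) : Prop := ∀ ω, ∑ i, f i ω ≤ 0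

/-- An agreeable trade: at every state each player expects a positive gain. -/
def Agreeable (t : N → Ω → Ω → ℝ) (f : N → Ω → ℝ) : Prop :=
  Trade f ∧ ∀ ω i, 0 < expect (t i ω) (f i)

/-- A weakly agreeable trade: at some state it is commonly certain that every
player expects a positive gain. -/
def WeaklyAgreeable (t : N → Ω → Ω → ℝ) (f : N → Ω → ℝ) : Prop :=
  Trade f ∧ ∃ ω, CommonlyCertainAt t {ω' | ∀ i, 0 < expect (t i ω') (f i)} ω

/-- An acceptable trade: at every state it is commonly certain that no player
expects a loss, and some player expects a strict gain at some state. -/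
def Acceptable (t : N → Ω → Ω → ℝ) (f : N → Ω → ℝ) : Prop :=
  Trade f ∧ (∀ ω, CommonlyCertainAt t {ω' | ∀ i, 0 ≤ expect (t i ω') (f i)} ω) ∧
    ∃ ω i, 0 < expect (t i ω) (f i)

/-- A multiplayer semi-trade: at every state it is commonly certain that no
player expects a loss. -/
def MSemiTrade (t : N → Ω → Ω → ℝ) (f : N → Ω → ℝ) : Prop :=
  ∀ ω, CommonlyCertainAt t {ω' | ∀ i, 0 ≤ expect (t i ω') (f i)} ω

/-- `p` is a multiplayer money pump: some semi-trade has negative total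
expectation under `p`. -/
def MMoneyPump (t : N → Ω → Ω → ℝ) (p : Ω → ℝ) : Prop :=
  ∃ f : N → Ω → ℝ, MSemiTrade t f ∧ expect p (fun ω => ∑ i, f i ω) < 0

/-- `p` is maximal: it assigns positive probability to every common certainty
component. -/
def IsMaximalDist (t : N → Ω → Ω → ℝ) (p : Ω → ℝ) : Prop :=
  ∀ S : Set Ω, CCC t S → 0 < mass p S

/-- A common prior for the information structure induced on a common certainty
component `S`: a distribution supported and normalised on `S` satisfying the
prior (disintegrability) condition for the restricted partitions and types. -/
def InducedCommonPrior (part : N → Ω → Set Ω) (t : N → Ω → Ω → ℝ)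
    (S : Set Ω) (pS : Ω → ℝ) : Prop :=
  (∀ ω, 0 ≤ pS ω) ∧ (∀ ω, ω ∉ S → pS ω = 0) ∧ mass pS S = 1 ∧
    ∀ i, ∀ E ⊆ S, ∀ ω ∈ S,
      mass pS (E ∩ (part i ω ∩ S)) = mass (t i ω) E * mass pS (part i ω ∩ S)

/-! A distribution is disintegrable for a player exactly when it is a linear combination of that
player's types, and then, by the law of total expectation, its expectation of any semi-trade is a
nonnegative average of nonnegative numbers; so a common prior admits no money pump. If `p` is not
a common prior, it fails to be a prior of some player `i`, hence lies outside the convex hull of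
`i`'s types, and a hyperplane separating it from that hull is a semi-trade of `i` alone with
negative `p`-expectation. Since every type is a probability, the whole state space is a common
certainty component, so letting the other players trade nothing gives a multiplayer money pump. -/

section Mass

lemma mass_eq_expect_indicator (q : Ω → ℝ) (A : Set Ω) : mass q A = expect q (A.indicator 1) := by
  classical
  simp only [mass, _root_.expect, Set.indicator_apply, Pi.one_apply, mul_ite, mul_one, mul_zero]

lemma mass_univ (q : Ω → ℝ) : mass q Set.univ = ∑ ω, q ω := by
  simp [mass]

lemma mass_singleton (q : Ω → ℝ) (a : Ω) : mass q {a} = q a := by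
  rw [mass, Finset.sum_eq_single a (fun b _ hb => if_neg (Set.mem_singleton_iff.not.mpr hb))
    (by simp)]
  exact if_pos rfl

lemma mass_add_mass_compl (q : Ω → ℝ) (A : Set Ω) : mass q A + mass q Aᶜ = ∑ ω, q ω := by
  classical
  rw [mass, mass, ← Finset.sum_add_distrib]
  exact Finset.sum_congr rfl fun ω _ => by by_cases h : ω ∈ A <;> simp [h]

lemma mass_eq_zero_iff_of_nonneg {q : Ω → ℝ} (hq : ∀ ω, 0 ≤ q ω) (A : Set Ω) :
    mass q A = 0 ↔ ∀ ω ∈ A, q ω = 0 := by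
  classical
  rw [mass, Finset.sum_eq_zero_iff_of_nonneg fun ω _ => by split_ifs <;> simp [hq]]
  exact forall_congr' fun ω => by by_cases h : ω ∈ A <;> simp [h]

lemma mass_inter_of_eq_zero {q : Ω → ℝ} {B : Set Ω} (hq : ∀ ω ∉ B, q ω = 0) (E : Set Ω) :
    mass q (E ∩ B) = mass q E := by
  classical
  refine Finset.sum_congr rfl fun ω _ => ?_
  by_cases hB : ω ∈ B <;> simp [hB, hq]

lemma expect_sum_smul (lam : Ω → ℝ) (q : Ω → Ω → ℝ) (f : Ω → ℝ) :
    expect (∑ ω, lam ω • q ω) f = ∑ ω, lam ω * expect (q ω) f := by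
  simp only [_root_.expect, Finset.sum_apply, Pi.smul_apply, smul_eq_mul, Finset.sum_mul,
    Finset.mul_sum, mul_assoc]
  exact Finset.sum_comm

lemma mass_sum_smul (lam : Ω → ℝ) (q : Ω → Ω → ℝ) (A : Set Ω) :
    mass (∑ ω, lam ω • q ω) A = ∑ ω, lam ω * mass (q ω) A := by
  simp only [mass_eq_expect_indicator, expect_sum_smul]

lemma expect_sum_apply (p : Ω → ℝ) (f : N → Ω → ℝ) :
    expect p (fun ω => ∑ i, f i ω) = ∑ i, expect p (f i) := by
  simp only [_root_.expect, Finset.mul_sum]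
  exact Finset.sum_comm

end Mass

namespace IsPartitionMap

variable {part : Ω → Set Ω}

omit [Fintype Ω] in
lemma eq_of_mem_of_mem (h : IsPartitionMap part) {x ω ω' : Ω} (hx : x ∈ part ω)
    (hx' : x ∈ part ω') : part ω = part ω' :=
  (h.2 ω x hx).symm.trans (h.2 ω' x hx')

omit [Fintype Ω] in
lemma mem_comm (h : IsPartitionMap part) {ω ω' : Ω} (hω' : ω' ∈ part ω) : ω ∈ part ω' :=
  h.eq_of_mem_of_mem (h.1 ω') hω' ▸ h.1 ω

end IsPartitionMap

namespace InfoStructure1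

variable {part : Ω → Set Ω} {t : Ω → Ω → ℝ}

lemma type_eq_zero (h : InfoStructure1 part t) {ω ω' : Ω} (hω' : ω' ∉ part ω) : t ω ω' = 0 := by
  have hcompl : mass (t ω) (part ω)ᶜ = 0 := by
    have := mass_add_mass_compl (t ω) (part ω)
    rw [h.2.2.1 ω, (h.2.1 ω).2] at this
    linarith
  exact (mass_eq_zero_iff_of_nonneg (h.2.1 ω).1 _).mp hcompl ω' hω'

lemma mass_inter_cell (h : InfoStructure1 part t) (ω ω₀ : Ω) (E : Set Ω) [Decidable (ω ∈ part ω₀)] :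
    mass (t ω) (E ∩ part ω₀) = if ω ∈ part ω₀ then mass (t ω₀) E else 0 := by
  split_ifs with hω
  · rw [h.2.2.2 ω₀ ω hω]
    exact mass_inter_of_eq_zero (fun x => h.type_eq_zero) E
  · refine (mass_eq_zero_iff_of_nonneg (h.2.1 ω).1 _).mpr fun x hx => h.type_eq_zero fun hxω => ?_
    exact hω (h.1.eq_of_mem_of_mem hxω hx.2 ▸ h.1.1 ω)

lemma eq_sum_smul_of_disintegrable (h : InfoStructure1 part t) {p : Ω → ℝ}
    (hd : Disintegrable part t p) : p = ∑ ω, p ω • t ω := by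
  classical
  funext ω'
  have hterm : ∀ ω, p ω * t ω ω' = (if ω ∈ part ω' then p ω else 0) * t ω' ω' := by
    intro ω
    by_cases hω : ω ∈ part ω'
    · rw [if_pos hω, h.2.2.2 ω' ω hω]
    · rw [if_neg hω, zero_mul, h.type_eq_zero fun hω' => hω (h.1.mem_comm hω'), mul_zero]
  have hcell := hd {ω'} ω'
  rw [Set.inter_eq_left.mpr (Set.singleton_subset_iff.mpr (h.1.1 ω')), mass_singleton,
    mass_singleton] at hcell
  simp only [Finset.sum_apply, Pi.smul_apply, smul_eq_mul, hterm, ← Finset.sum_mul]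
  rw [hcell, mul_comm]
  rfl

lemma disintegrable_of_eq_sum_smul (h : InfoStructure1 part t) {p lam : Ω → ℝ}
    (hp : p = ∑ ω, lam ω • t ω) : Disintegrable part t p := by
  classical
  have hcell : ∀ (E : Set Ω) (ω₀ : Ω),
      mass p (E ∩ part ω₀) = mass (t ω₀) E * mass lam (part ω₀) := by
    intro E ω₀
    rw [hp, mass_sum_smul, show mass lam (part ω₀) = ∑ ω, if ω ∈ part ω₀ then lam ω else 0 from rfl,
      Finset.mul_sum]
    exact Finset.sum_congr rfl fun ω _ => by rw [h.mass_inter_cell]; split_ifs <;> ring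
  intro E ω₀
  have hcell_univ := hcell Set.univ ω₀
  rw [Set.univ_inter, mass_univ, (h.2.1 ω₀).2, one_mul] at hcell_univ
  rw [hcell, hcell_univ]

lemma disintegrable_of_mem_span (h : InfoStructure1 part t) {p : Ω → ℝ}
    (hp : p ∈ Submodule.span ℝ (Set.range t)) : Disintegrable part t p := by
  obtain ⟨lam, rfl⟩ := (Submodule.mem_span_range_iff_exists_fun ℝ).mp hp
  exact h.disintegrable_of_eq_sum_smul rfl

lemma expect_eq_sum_of_disintegrable (h : InfoStructure1 part t) {p : Ω → ℝ}
    (hd : Disintegrable part t p) (f : Ω → ℝ) : expect p f = ∑ ω, p ω * expect (t ω) f := by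
  conv_lhs => rw [h.eq_sum_smul_of_disintegrable hd]
  exact expect_sum_smul p t f

lemma not_moneyPump1_of_disintegrable (h : InfoStructure1 part t) {p : Ω → ℝ}
    (hp : ∀ ω, 0 ≤ p ω) (hd : Disintegrable part t p) : ¬ MoneyPump1 t p := by
  rintro ⟨f, hf, hneg⟩
  rw [h.expect_eq_sum_of_disintegrable hd] at hneg
  exact hneg.not_ge (Finset.sum_nonneg fun ω _ => mul_nonneg (hp ω) (hf ω))

end InfoStructure1

lemma moneyPump1_of_not_mem_convexHull {t : Ω → Ω → ℝ} {p : Ω → ℝ}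
    (ht : ∀ ω, ∑ ω', t ω ω' = 1) (hp : ∑ ω, p ω = 1) (hnot : p ∉ convexHull ℝ (Set.range t)) :
    MoneyPump1 t p := by
  classical
  obtain ⟨φ, u, hφt, hφp⟩ := geometric_hahn_banach_closed_point (convex_convexHull ℝ _)
    ((Set.finite_range t).isCompact_convexHull ℝ).isClosed hnot
  -- `φ q = expect q g`, so `u - g` has expectation `u - φ q` under every probability `q`
  set g : Ω → ℝ := fun ω' => φ fun x => if ω' = x then 1 else 0
  have hexpect : ∀ q : Ω → ℝ, ∑ ω, q ω = 1 → expect q (fun ω' => u - g ω') = u - φ q := by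
    intro q hq
    simp only [_root_.expect, mul_sub, Finset.sum_sub_distrib, ← Finset.sum_mul, hq, one_mul, g]
    exact congrArg (u - ·) (φ.toLinearMap.pi_apply_eq_sum_univ q).symm
  refine ⟨fun ω' => u - g ω', fun ω => ?_, ?_⟩
  · rw [hexpect _ (ht ω)]
    linarith [hφt _ (subset_convexHull ℝ _ (Set.mem_range_self ω))]
  · rw [hexpect p hp]
    linarith

lemma InfoStructure1.moneyPump1_of_not_disintegrable {part : Ω → Set Ω} {t : Ω → Ω → ℝ}
    (h : InfoStructure1 part t) {p : Ω → ℝ} (hp : ∑ ω, p ω = 1) (hd : ¬ Disintegrable part t p) :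
    MoneyPump1 t p :=
  moneyPump1_of_not_mem_convexHull (fun ω => (h.2.1 ω).2) hp fun hmem =>
    hd (h.disintegrable_of_mem_span
      (convexHull_min Submodule.subset_span (Submodule.span ℝ _).convex hmem))

section Multiplayer

variable {t : N → Ω → Ω → ℝ}

omit [Fintype N] in
lemma ccc_univ [Nonempty Ω] (ht : ∀ i ω, ∑ ω', t i ω ω' = 1) : CCC t Set.univ :=
  ⟨Set.univ_nonempty, fun ω _ i => ⟨Set.univ, subset_rfl, by rw [mass_univ, ht]⟩⟩

omit [Fintype N] in
lemma mSemiTrade_iff (ht : ∀ i ω, ∑ ω', t i ω ω' = 1) {f : N → Ω → ℝ} :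
    MSemiTrade t f ↔ ∀ i, SemiTrade1 (t i) (f i) := by
  constructor
  · intro hf i ω
    obtain ⟨S, -, hωS, hS⟩ := hf ω
    exact hS hωS i
  · intro hf ω
    have : Nonempty Ω := ⟨ω⟩
    exact ⟨Set.univ, ccc_univ ht, trivial, fun ω' _ i => hf i ω'⟩

lemma mMoneyPump_of_moneyPump1 (ht : ∀ i ω, ∑ ω', t i ω ω' = 1) {p : Ω → ℝ} {i : N}
    (h : MoneyPump1 (t i) p) : MMoneyPump t p := by
  classical
  obtain ⟨g, hg, hneg⟩ := h
  refine ⟨Pi.single i g, (mSemiTrade_iff ht).mpr fun j ω => ?_, ?_⟩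
  · by_cases hj : j = i
    · subst hj
      simpa using hg ω
    · simp [hj, _root_.expect]
  · rw [expect_sum_apply, Finset.sum_eq_single i (fun j _ hj => by simp [hj, _root_.expect])
      (by simp)]
    simpa using hneg

lemma CommonPrior.not_mMoneyPump {part : N → Ω → Set Ω} (hT : InfoStructure part t) {p : Ω → ℝ}
    (hcp : CommonPrior part t p) : ¬ MMoneyPump t p := by
  rintro ⟨f, hf, hneg⟩
  have hf' := (mSemiTrade_iff fun i ω => ((hT i).2.1 ω).2).mp hf
  rw [expect_sum_apply] at hneg
  refine hneg.not_ge (Finset.sum_nonneg fun i _ => not_lt.mp fun hlt => ?_)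
  exact (hT i).not_moneyPump1_of_disintegrable hcp.1.1 (hcp.2 i) ⟨f i, hf' i, hlt⟩

end Multiplayer

/-- exactly one of the following holds: `p` is a common prior, or
`p` is a multiplayer money pump. -/
theorem commonPrior_xor_moneyPump (part : N → Ω → Set Ω) (t : N → Ω → Ω → ℝ)
    (hT : InfoStructure part t) (p : Ω → ℝ) (hp : IsProbDist p) :
    Xor' (CommonPrior part t p) (MMoneyPump t p) := by
  by_cases hcp : CommonPrior part t p
  · exact Or.inl ⟨hcp, hcp.not_mMoneyPump hT⟩
  · refine Or.inr ⟨?_, hcp⟩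
    obtain ⟨i, hi⟩ : ∃ i, ¬ Disintegrable (part i) (t i) p := by
      by_contra! h
      exact hcp ⟨hp, h⟩
    exact mMoneyPump_of_moneyPump1 (fun i ω => ((hT i).2.1 ω).2)
      ((hT i).moneyPump1_of_not_disintegrable hp.2 hi)
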